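/- In Ahlswede's example, for any Δ ≥ 0, any R ≥ 0, and any ξ ∈ (0,1), Marton's exponent for the source P = Q_ξ reduces to a one-dimensional optimization: E_M(R|Δ,Q_ξ) = min over λ ∈ [0,1] with R(Δ|Q_λ) ≥ R of D_2(λ||ξ). -/

import Mathlib

open scoped Classical

noncomputable section

/-- `p` is a probability distribution on the finite alphabet `X`. -/
def IsProb {X : Type*} [Fintype X] (p : X → ℝ) : Prop :=
  (∀ x, 0 ≤ p x) ∧ ∑ x, p x = 1

/-- `W` is a conditional probability distribution (stochastic matrix) from `X` to `Y`. -/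
def IsKernel {X Y : Type*} [Fintype X] [Fintype Y] (W : X → Y → ℝ) : Prop :=
  (∀ x y, 0 ≤ W x y) ∧ ∀ x, ∑ y, W x y = 1

/-- Mutual information `I(q, W)`. -/
def mutualInfo {X Y : Type*} [Fintype X] [Fintype Y] (q : X → ℝ) (W : X → Y → ℝ) : ℝ :=
  ∑ x, ∑ y, q x * W x y * Real.log (W x y / ∑ x', q x' * W x' y)

/-- The rate-distortion function `R(Δ|q)`. -/
def rdFun {X Y : Type*} [Fintype X] [Fintype Y] (d : X → Y → ℝ) (Δ : ℝ) (q : X → ℝ) : ℝ :=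
  sInf { r | ∃ W, IsKernel W ∧ (∑ x, ∑ y, q x * W x y * d x y) ≤ Δ ∧ r = mutualInfo q W }

/-- Kullback–Leibler divergence `D(q‖P)`, equal to `⊤` when `q` is not absolutely
continuous with respect to `P`. -/
def klDiv {X : Type*} [Fintype X] (q P : X → ℝ) : EReal :=
  if ∀ x, P x = 0 → q x = 0 then (((∑ x, q x * Real.log (q x / P x)) : ℝ) : EReal) else ⊤

/-- Real-valued Kullback–Leibler divergence (used when `P` has full support, in which
case `q` is automatically absolutely continuous with respect to `P`). -/
def klDivR {X : Type*} [Fintype X] (q P : X → ℝ) : ℝ :=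
  ∑ x, q x * Real.log (q x / P x)

/-- Ahlswede's distortion measure on `𝒳 = 𝒳_A ⊕ 𝒳_B` (with `𝒴 = 𝒳`). -/
def dAhl {A B : Type*} [DecidableEq A] [DecidableEq B] (a b : ℝ) :
    A ⊕ B → A ⊕ B → ℝ
  | Sum.inl x, Sum.inl y => if x = y then 0 else 1
  | Sum.inr x, Sum.inr y => if x = y then 0 else a
  | _, _ => b

/-- The uniform distribution on `𝒳_A`, viewed as a distribution on `𝒳_A ⊕ 𝒳_B`. -/
def QA {A B : Type*} [Fintype A] : A ⊕ B → ℝ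
  | Sum.inl _ => ((Fintype.card A : ℝ))⁻¹
  | Sum.inr _ => 0

/-- The uniform distribution on `𝒳_B`, viewed as a distribution on `𝒳_A ⊕ 𝒳_B`. -/
def QB {A B : Type*} [Fintype B] : A ⊕ B → ℝ
  | Sum.inl _ => 0
  | Sum.inr _ => ((Fintype.card B : ℝ))⁻¹

/-- The mixture `Q_λ = λ Q_A + (1−λ) Q_B`. -/
def Qmix {A B : Type*} [Fintype A] [Fintype B] (lam : ℝ) (z : A ⊕ B) : ℝ :=
  lam * QA z + (1 - lam) * QB z

/-- The binary Kullback–Leibler divergence `D_2(p‖q)`. -/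
def D2 (p q : ℝ) : ℝ :=
  p * Real.log (p / q) + (1 - p) * Real.log ((1 - p) / (1 - q))


open Finset

/-! ### Auxiliary lemmas -/

lemma logSum {ι : Type*} (s : Finset ι) (a b : ι → ℝ)
    (ha : ∀ i ∈ s, 0 ≤ a i) (hb : ∀ i ∈ s, 0 ≤ b i)
    (hab : ∀ i ∈ s, b i = 0 → a i = 0) :
    (∑ i ∈ s, a i) * Real.log ((∑ i ∈ s, a i) / (∑ i ∈ s, b i)) ≤
      ∑ i ∈ s, a i * Real.log (a i / b i) := by
  by_cases hA : (∑ i ∈ s, a i) = 0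
  · have hzero : ∀ i ∈ s, a i = 0 := (Finset.sum_eq_zero_iff_of_nonneg ha).1 hA
    rw [hA, zero_mul]
    refine Finset.sum_nonneg (fun i hi => ?_)
    rw [hzero i hi]; simp
  · have hApos : 0 < ∑ i ∈ s, a i :=
      lt_of_le_of_ne (Finset.sum_nonneg ha) (Ne.symm hA)
    have hBpos : 0 < ∑ i ∈ s, b i := by
      rcases (Finset.sum_nonneg hb).lt_or_eq with h | h
      · exact h
      · exfalso; apply hA
        have hbz : ∀ i ∈ s, b i = 0 := (Finset.sum_eq_zero_iff_of_nonneg hb).1 h.symm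
        exact Finset.sum_eq_zero (fun i hi => hab i hi (hbz i hi))
    set SA := ∑ i ∈ s, a i
    set SB := ∑ i ∈ s, b i
    have key : ∀ i ∈ s,
        a i * Real.log (SA / SB) - a i * Real.log (a i / b i)
          ≤ (SA / SB) * b i - a i := by
      intro i hi
      rcases (ha i hi).lt_or_eq with hai | hai
      · have hbi : 0 < b i := by
          rcases (hb i hi).lt_or_eq with h | h
          · exact h
          · exact absurd (hab i hi h.symm) hai.ne'
        have hpos : 0 < (SA / SB) * (b i / a i) :=
          mul_pos (div_pos hApos hBpos) (div_pos hbi hai)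
        have hlog := Real.log_le_sub_one_of_pos hpos
        have hmul : Real.log ((SA / SB) * (b i / a i))
            = Real.log (SA / SB) - Real.log (a i / b i) := by
          rw [Real.log_mul (div_pos hApos hBpos).ne' (div_pos hbi hai).ne',
            Real.log_div hbi.ne' hai.ne', Real.log_div hai.ne' hbi.ne']
          ring
        have := mul_le_mul_of_nonneg_left hlog hai.le
        rw [hmul] at this
        calc a i * Real.log (SA / SB) - a i * Real.log (a i / b i)
            = a i * (Real.log (SA / SB) - Real.log (a i / b i)) := by ring
          _ ≤ a i * ((SA / SB) * (b i / a i) - 1) := this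
          _ = (SA / SB) * b i - a i := by field_simp
      · rw [← hai]
        simp only [zero_mul, sub_zero, zero_sub, neg_nonpos, sub_zero]
        have : 0 ≤ (SA / SB) * b i :=
          mul_nonneg (div_pos hApos hBpos).le (hb i hi)
        linarith
    have hsum := Finset.sum_le_sum key
    rw [Finset.sum_sub_distrib, Finset.sum_sub_distrib, ← Finset.sum_mul,
      ← Finset.mul_sum] at hsum
    have : (SA / SB) * SB - SA = 0 := by field_simp; ring
    linarith

lemma self_log_self (m : ℝ) : m * Real.log (m / m) = 0 := by
  by_cases hm : m = 0
  · rw [hm, zero_mul]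
  · rw [div_self hm, Real.log_one, mul_zero]

lemma mutualInfo_nonneg {X Y : Type*} [Fintype X] [Fintype Y] (q : X → ℝ) (W : X → Y → ℝ)
    (hq : ∀ x, 0 ≤ q x) (hq1 : ∑ x, q x = 1) (hW : ∀ x y, 0 ≤ W x y) :
    0 ≤ mutualInfo q W := by
  rw [mutualInfo, Finset.sum_comm]
  refine Finset.sum_nonneg (fun y _ => ?_)
  set m := ∑ x', q x' * W x' y with hm
  have hterm_nonneg : ∀ x ∈ Finset.univ (α := X), 0 ≤ q x * W x y :=
    fun x _ => mul_nonneg (hq x) (hW x y)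
  have key := logSum Finset.univ (fun x => q x * W x y) (fun x => q x * m)
    hterm_nonneg
    (fun x _ => mul_nonneg (hq x) (Finset.sum_nonneg hterm_nonneg))
    (fun x _ hbx => by
      show q x * W x y = 0
      rcases mul_eq_zero.1 hbx with h | h
      · rw [h, zero_mul]
      · exact (Finset.sum_eq_zero_iff_of_nonneg hterm_nonneg).1 h x (Finset.mem_univ x))
  have hsb : ∑ x, q x * m = m := by rw [← Finset.sum_mul, hq1, one_mul]
  rw [hsb] at key
  have hsa : ∑ x, q x * W x y = m := rfl
  rw [hsa, self_log_self] at key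
  refine key.trans_eq (Finset.sum_congr rfl (fun x _ => ?_))
  show q x * W x y * Real.log (q x * W x y / (q x * m)) = _
  by_cases hx : q x = 0
  · rw [hx, zero_mul, zero_mul, zero_mul]
  · rw [mul_div_mul_left _ _ hx]

lemma mutualInfo_relabel {X Y : Type*} [Fintype X] [Fintype Y] (q : X → ℝ) (W : X → Y → ℝ)
    (σ : X ≃ X) (τ : Y ≃ Y) :
    mutualInfo (fun x => q (σ x)) (fun x y => W (σ x) (τ y)) = mutualInfo q W := by
  rw [mutualInfo, mutualInfo]
  have hmarg : ∀ y, (∑ x', q (σ x') * W (σ x') (τ y)) = ∑ x', q x' * W x' (τ y) :=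
    fun y => Fintype.sum_equiv σ _ _ (fun x => rfl)
  refine Fintype.sum_equiv σ _ _ (fun x => ?_)
  refine Fintype.sum_equiv τ _ _ (fun y => ?_)
  rw [hmarg y]

lemma mutualInfo_concave {X Y ι : Type*} [Fintype X] [Fintype Y] [Fintype ι]
    (c : ι → ℝ) (qf : ι → X → ℝ) (W : X → Y → ℝ)
    (hc : ∀ i, 0 ≤ c i) (hc1 : ∑ i, c i = 1)
    (hq : ∀ i x, 0 ≤ qf i x) (hW : ∀ x y, 0 ≤ W x y) :
    ∑ i, c i * mutualInfo (qf i) W ≤ mutualInfo (fun x => ∑ i, c i * qf i x) W := by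
  classical
  set m : ι → Y → ℝ := fun i y => ∑ x, qf i x * W x y with hm
  set mbar : Y → ℝ := fun y => ∑ x, (∑ i, c i * qf i x) * W x y with hmbar
  have hm_nonneg : ∀ i y, 0 ≤ m i y :=
    fun i y => Finset.sum_nonneg (fun x _ => mul_nonneg (hq i x) (hW x y))
  have hmbar_eq : ∀ y, mbar y = ∑ i, c i * m i y := by
    intro y
    calc mbar y = ∑ x, ∑ i, c i * (qf i x * W x y) := by
          refine Finset.sum_congr rfl (fun x _ => ?_)
          rw [Finset.sum_mul]
          exact Finset.sum_congr rfl (fun i _ => by ring)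
      _ = ∑ i, ∑ x, c i * (qf i x * W x y) := Finset.sum_comm
      _ = ∑ i, c i * m i y := Finset.sum_congr rfl (fun i _ => by
          rw [Finset.mul_sum])
  have hmbar_nonneg : ∀ y, 0 ≤ mbar y := by
    intro y
    rw [hmbar_eq y]
    exact Finset.sum_nonneg (fun i _ => mul_nonneg (hc i) (hm_nonneg i y))
  set S : ι → ℝ := fun i => ∑ x, ∑ y, qf i x * W x y * Real.log (W x y / mbar y) with hS
  have hmix : mutualInfo (fun x => ∑ i, c i * qf i x) W = ∑ i, c i * S i := by
    calc mutualInfo (fun x => ∑ i, c i * qf i x) W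
        = ∑ x, ∑ y, (∑ i, c i * qf i x) * W x y * Real.log (W x y / mbar y) := rfl
      _ = ∑ x, ∑ y, ∑ i, c i * (qf i x * W x y * Real.log (W x y / mbar y)) := by
          refine Finset.sum_congr rfl (fun x _ => Finset.sum_congr rfl (fun y _ => ?_))
          rw [Finset.sum_mul, Finset.sum_mul]
          exact Finset.sum_congr rfl (fun i _ => by ring)
      _ = ∑ x, ∑ i, ∑ y, c i * (qf i x * W x y * Real.log (W x y / mbar y)) := by
          exact Finset.sum_congr rfl (fun x _ => Finset.sum_comm)
      _ = ∑ i, ∑ x, ∑ y, c i * (qf i x * W x y * Real.log (W x y / mbar y)) :=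
          Finset.sum_comm
      _ = ∑ i, c i * S i := by
          refine Finset.sum_congr rfl (fun i _ => ?_)
          rw [hS, Finset.mul_sum]
          exact Finset.sum_congr rfl (fun x _ => by rw [Finset.mul_sum])
  have hkey : ∀ i, c i * S i - c i * mutualInfo (qf i) W
      = ∑ y, c i * m i y * (Real.log (m i y) - Real.log (mbar y)) := by
    intro i
    by_cases hci : c i = 0
    · simp [hci]
    have hcpos : 0 < c i := lt_of_le_of_ne (hc i) (Ne.symm hci)
    have hterm : ∀ x y, qf i x * W x y * Real.log (W x y / mbar y)
        - qf i x * W x y * Real.log (W x y / m i y)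
        = qf i x * W x y * (Real.log (m i y) - Real.log (mbar y)) := by
      intro x y
      by_cases h0 : qf i x * W x y = 0
      · rw [h0]; ring
      have hqx : 0 < qf i x := lt_of_le_of_ne (hq i x) (fun h => h0 (by rw [← h, zero_mul]))
      have hWx : 0 < W x y := lt_of_le_of_ne (hW x y) (fun h => h0 (by rw [← h, mul_zero]))
      have hmi : 0 < m i y :=
        lt_of_lt_of_le (mul_pos hqx hWx)
          (Finset.single_le_sum (fun x' _ => mul_nonneg (hq i x') (hW x' y))
            (Finset.mem_univ x))
      have hmb : 0 < mbar y := by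
        rw [hmbar_eq y]
        exact lt_of_lt_of_le (mul_pos hcpos hmi)
          (Finset.single_le_sum (fun j _ => mul_nonneg (hc j) (hm_nonneg j y))
            (Finset.mem_univ i))
      rw [Real.log_div hWx.ne' hmb.ne', Real.log_div hWx.ne' hmi.ne']
      ring
    have hSdiff : S i - mutualInfo (qf i) W
        = ∑ y, m i y * (Real.log (m i y) - Real.log (mbar y)) := by
      rw [hS, mutualInfo, ← Finset.sum_sub_distrib]
      calc ∑ x, ((∑ y, qf i x * W x y * Real.log (W x y / mbar y))
              - ∑ y, qf i x * W x y * Real.log (W x y / m i y))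
          = ∑ x, ∑ y, qf i x * W x y * (Real.log (m i y) - Real.log (mbar y)) := by
            refine Finset.sum_congr rfl (fun x _ => ?_)
            rw [← Finset.sum_sub_distrib]
            exact Finset.sum_congr rfl (fun y _ => hterm x y)
        _ = ∑ y, ∑ x, qf i x * W x y * (Real.log (m i y) - Real.log (mbar y)) :=
            Finset.sum_comm
        _ = ∑ y, m i y * (Real.log (m i y) - Real.log (mbar y)) := by
            refine Finset.sum_congr rfl (fun y _ => ?_)
            rw [hm, ← Finset.sum_mul]
    rw [← mul_sub, hSdiff, Finset.mul_sum]
    exact Finset.sum_congr rfl (fun y _ => by ring)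
  rw [hmix, ← sub_nonneg, ← Finset.sum_sub_distrib]
  have hre : ∑ i, (c i * S i - c i * mutualInfo (qf i) W)
      = ∑ y, ∑ i, c i * m i y * (Real.log (m i y) - Real.log (mbar y)) := by
    rw [← Finset.sum_comm]
    exact Finset.sum_congr rfl (fun i _ => hkey i)
  rw [hre]
  refine Finset.sum_nonneg (fun y _ => ?_)
  have key := logSum Finset.univ (fun i => c i * m i y) (fun i => c i * mbar y)
    (fun i _ => mul_nonneg (hc i) (hm_nonneg i y))
    (fun i _ => mul_nonneg (hc i) (hmbar_nonneg y))
    (fun i _ hb0 => by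
      show c i * m i y = 0
      rcases mul_eq_zero.1 hb0 with h | h
      · rw [h, zero_mul]
      · have := hmbar_eq y ▸ h
        have hnn : ∀ j ∈ Finset.univ (α := ι), 0 ≤ c j * m j y :=
          fun j _ => mul_nonneg (hc j) (hm_nonneg j y)
        exact (Finset.sum_eq_zero_iff_of_nonneg hnn).1 this i (Finset.mem_univ i))
  rw [← hmbar_eq y, ← Finset.sum_mul, hc1, one_mul, self_log_self] at key
  refine key.trans_eq (Finset.sum_congr rfl (fun i _ => ?_))
  by_cases h0 : c i * m i y = 0
  · rw [h0, zero_mul, zero_mul]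
  have hci : c i ≠ 0 := fun h => h0 (by rw [h, zero_mul])
  have hmi : 0 < m i y := lt_of_le_of_ne (hm_nonneg i y) (fun h => h0 (by rw [← h, mul_zero]))
  have hmb : 0 < mbar y := by
    rw [hmbar_eq y]
    exact lt_of_lt_of_le (mul_pos (lt_of_le_of_ne (hc i) (Ne.symm hci)) hmi)
      (Finset.single_le_sum (fun j _ => mul_nonneg (hc j) (hm_nonneg j y))
        (Finset.mem_univ i))
  rw [mul_div_mul_left _ _ hci, Real.log_div hmi.ne' hmb.ne']

lemma mutualInfo_convex {X Y ι : Type*} [Fintype X] [Fintype Y] [Fintype ι]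
    (c : ι → ℝ) (q : X → ℝ) (Wf : ι → X → Y → ℝ)
    (hc : ∀ i, 0 ≤ c i) (hq : ∀ x, 0 ≤ q x) (hW : ∀ i x y, 0 ≤ Wf i x y) :
    mutualInfo q (fun x y => ∑ i, c i * Wf i x y) ≤ ∑ i, c i * mutualInfo q (Wf i) := by
  classical
  set m : ι → Y → ℝ := fun i y => ∑ x, q x * Wf i x y with hm
  set mbar : Y → ℝ := fun y => ∑ x', q x' * ∑ i, c i * Wf i x' y with hmbar
  have hm_nonneg : ∀ i y, 0 ≤ m i y :=
    fun i y => Finset.sum_nonneg (fun x _ => mul_nonneg (hq x) (hW i x y))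
  have hmbar_eq : ∀ y, mbar y = ∑ i, c i * m i y := by
    intro y
    calc mbar y = ∑ x, ∑ i, c i * (q x * Wf i x y) := by
          refine Finset.sum_congr rfl (fun x _ => ?_)
          rw [Finset.mul_sum]
          exact Finset.sum_congr rfl (fun i _ => by ring)
      _ = ∑ i, ∑ x, c i * (q x * Wf i x y) := Finset.sum_comm
      _ = ∑ i, c i * m i y := Finset.sum_congr rfl (fun i _ => by rw [Finset.mul_sum])
  have hpt : ∀ x y, q x * (∑ i, c i * Wf i x y) * Real.log ((∑ i, c i * Wf i x y) / mbar y)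
      ≤ ∑ i, c i * (q x * Wf i x y * Real.log (Wf i x y / m i y)) := by
    intro x y
    by_cases hqx : q x = 0
    · rw [hqx]
      simp
    have hqpos : 0 < q x := lt_of_le_of_ne (hq x) (Ne.symm hqx)
    have key := logSum Finset.univ (fun i => c i * (q x * Wf i x y))
      (fun i => c i * (q x * m i y))
      (fun i _ => mul_nonneg (hc i) (mul_nonneg (hq x) (hW i x y)))
      (fun i _ => mul_nonneg (hc i) (mul_nonneg (hq x) (hm_nonneg i y)))
      (fun i _ hb0 => by
        show c i * (q x * Wf i x y) = 0
        rcases mul_eq_zero.1 hb0 with h | h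
        · rw [h, zero_mul]
        · rcases mul_eq_zero.1 h with h' | h'
          · exact absurd h' hqx
          · have hnn : ∀ x' ∈ Finset.univ (α := X), 0 ≤ q x' * Wf i x' y :=
              fun x' _ => mul_nonneg (hq x') (hW i x' y)
            have := (Finset.sum_eq_zero_iff_of_nonneg hnn).1 h' x (Finset.mem_univ x)
            rw [this, mul_zero])
    have hsa : ∑ i, c i * (q x * Wf i x y) = q x * ∑ i, c i * Wf i x y := by
      rw [Finset.mul_sum]
      exact Finset.sum_congr rfl (fun i _ => by ring)
    have hsb : ∑ i, c i * (q x * m i y) = q x * mbar y := by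
      rw [hmbar_eq y, Finset.mul_sum]
      exact Finset.sum_congr rfl (fun i _ => by ring)
    rw [hsa, hsb, mul_div_mul_left _ _ hqx] at key
    refine le_trans key (le_of_eq (Finset.sum_congr rfl (fun i _ => ?_)))
    by_cases hci : c i = 0
    · rw [hci, zero_mul, zero_mul, zero_mul]
    have hcq : c i * q x ≠ 0 := mul_ne_zero hci hqx
    calc c i * (q x * Wf i x y) * Real.log (c i * (q x * Wf i x y) / (c i * (q x * m i y)))
        = (c i * q x) * Wf i x y * Real.log ((c i * q x) * Wf i x y / ((c i * q x) * m i y)) := by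
          ring_nf
      _ = (c i * q x) * Wf i x y * Real.log (Wf i x y / m i y) := by
          rw [mul_div_mul_left _ _ hcq]
      _ = c i * (q x * Wf i x y * Real.log (Wf i x y / m i y)) := by ring
  calc mutualInfo q (fun x y => ∑ i, c i * Wf i x y)
      = ∑ x, ∑ y, q x * (∑ i, c i * Wf i x y) * Real.log ((∑ i, c i * Wf i x y) / mbar y) := rfl
    _ ≤ ∑ x, ∑ y, ∑ i, c i * (q x * Wf i x y * Real.log (Wf i x y / m i y)) :=
        Finset.sum_le_sum (fun x _ => Finset.sum_le_sum (fun y _ => hpt x y))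
    _ = ∑ x, ∑ i, ∑ y, c i * (q x * Wf i x y * Real.log (Wf i x y / m i y)) :=
        Finset.sum_congr rfl (fun x _ => Finset.sum_comm)
    _ = ∑ i, ∑ x, ∑ y, c i * (q x * Wf i x y * Real.log (Wf i x y / m i y)) :=
        Finset.sum_comm
    _ = ∑ i, c i * mutualInfo q (Wf i) := by
        refine Finset.sum_congr rfl (fun i _ => ?_)
        rw [mutualInfo, Finset.mul_sum]
        exact Finset.sum_congr rfl (fun x _ => by rw [Finset.mul_sum])

/-! ### Cyclic permutation machinery -/

def cycPerm {A : Type*} [Fintype A] (e : A ≃ ZMod (Fintype.card A))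
    (t : ZMod (Fintype.card A)) : Equiv.Perm A :=
  e.trans ((Equiv.addLeft t).trans e.symm)

lemma cycPerm_symm {A : Type*} [Fintype A] (e : A ≃ ZMod (Fintype.card A))
    (t : ZMod (Fintype.card A)) : (cycPerm e t).symm = cycPerm e (-t) := by
  ext x
  rw [Equiv.symm_apply_eq]
  simp [cycPerm]

lemma sum_cycPerm {A M : Type*} [Fintype A] [NeZero (Fintype.card A)] [AddCommMonoid M]
    (e : A ≃ ZMod (Fintype.card A)) (f : A → M) (x : A) :
    ∑ t : ZMod (Fintype.card A), f (cycPerm e t x) = ∑ a : A, f a :=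
  Fintype.sum_equiv ((Equiv.addRight (e x)).trans e.symm) _ _ (fun t => rfl)

lemma dAhl_refl {A B : Type*} [DecidableEq A] [DecidableEq B] (a b : ℝ) (z : A ⊕ B) :
    dAhl (A := A) (B := B) a b z z = 0 := by
  cases z <;> simp [dAhl]

lemma dAhl_perm {A B : Type*} [DecidableEq A] [DecidableEq B] (a b : ℝ)
    (pa : Equiv.Perm A) (pb : Equiv.Perm B) (z w : A ⊕ B) :
    dAhl (A := A) (B := B) a b (Equiv.sumCongr pa pb z) (Equiv.sumCongr pa pb w)
      = dAhl (A := A) (B := B) a b z w := by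
  cases z <;> cases w <;>
    simp [dAhl, Equiv.sumCongr_apply, Sum.map, EmbeddingLike.apply_eq_iff_eq]


lemma rd_le_rd_mix {A B : Type*} [Fintype A] [Fintype B] [Nonempty A] [Nonempty B]
    [DecidableEq A] [DecidableEq B] (a b Δ : ℝ) (hΔ : 0 ≤ Δ)
    (q : A ⊕ B → ℝ) (hq : IsProb q) :
    rdFun (dAhl (A := A) (B := B) a b) Δ q ≤
      rdFun (dAhl (A := A) (B := B) a b) Δ
        (Qmix (A := A) (B := B) (∑ x, q (Sum.inl x))) := by
  classical
  haveI hA0 : NeZero (Fintype.card A) := ⟨Fintype.card_ne_zero⟩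
  haveI hB0 : NeZero (Fintype.card B) := ⟨Fintype.card_ne_zero⟩
  obtain ⟨eA⟩ : Nonempty (A ≃ ZMod (Fintype.card A)) :=
    ⟨Fintype.equivOfCardEq (ZMod.card (Fintype.card A)).symm⟩
  obtain ⟨eB⟩ : Nonempty (B ≃ ZMod (Fintype.card B)) :=
    ⟨Fintype.equivOfCardEq (ZMod.card (Fintype.card B)).symm⟩
  set lam := ∑ x, q (Sum.inl x) with hlam
  set d := dAhl (A := A) (B := B) a b with hd
  set G := ZMod (Fintype.card A) × ZMod (Fintype.card B) with hG
  set σ : G → Equiv.Perm (A ⊕ B) :=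
    fun g => Equiv.sumCongr (cycPerm eA g.1) (cycPerm eB g.2) with hσ
  set N : ℝ := (Fintype.card A : ℝ) * (Fintype.card B : ℝ) with hN
  have hApos : (0:ℝ) < (Fintype.card A : ℝ) := by
    exact_mod_cast Fintype.card_pos (α := A)
  have hBpos : (0:ℝ) < (Fintype.card B : ℝ) := by
    exact_mod_cast Fintype.card_pos (α := B)
  have hNpos : 0 < N := by rw [hN]; positivity
  have hcardG : (Fintype.card G : ℝ) = N := by
    have h1 : Fintype.card G = Fintype.card A * Fintype.card B := by
      show Fintype.card (ZMod (Fintype.card A) × ZMod (Fintype.card B)) = _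
      rw [Fintype.card_prod, ZMod.card, ZMod.card]
    rw [h1, hN]
    push_cast
    ring
  have hlam2 : ∑ z, q (Sum.inr z) = 1 - lam := by
    have h2 := hq.2
    rw [Fintype.sum_sum_type] at h2
    rw [hlam]; linarith
  have hdinv : ∀ (g : G) (z w : A ⊕ B), d (σ g z) (σ g w) = d z w :=
    fun g z w => dAhl_perm a b (cycPerm eA g.1) (cycPerm eB g.2) z w
  -- averaging identity
  have havg : ∀ z, ∑ g : G, q (σ g z) = N * Qmix (A := A) (B := B) lam z := by
    intro z
    cases z with
    | inl x =>
        rw [Fintype.sum_prod_type]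
        have hinner : ∀ t, (∑ _s : ZMod (Fintype.card B),
            q (Sum.inl (cycPerm eA t x)))
              = (Fintype.card B : ℝ) * q (Sum.inl (cycPerm eA t x)) := by
          intro t
          rw [Finset.sum_const, Finset.card_univ, ZMod.card, nsmul_eq_mul]
        calc ∑ t, ∑ s : ZMod (Fintype.card B), q (σ (t, s) (Sum.inl x))
            = ∑ t, (Fintype.card B : ℝ) * q (Sum.inl (cycPerm eA t x)) := by
              refine Finset.sum_congr rfl (fun t _ => ?_)
              rw [← hinner t]
              rfl
          _ = (Fintype.card B : ℝ) * ∑ t, q (Sum.inl (cycPerm eA t x)) := by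
              rw [Finset.mul_sum]
          _ = (Fintype.card B : ℝ) * lam := by
              have h3 := sum_cycPerm (M := ℝ) eA (fun z => q (Sum.inl z)) x
              rw [h3, hlam]
          _ = N * Qmix (A := A) (B := B) lam (Sum.inl x) := by
              simp only [Qmix, QA, QB, hN]
              field_simp
              ring
    | inr y =>
        rw [Fintype.sum_prod_type_right]
        have hinner : ∀ s, (∑ _t : ZMod (Fintype.card A),
            q (Sum.inr (cycPerm eB s y)))
              = (Fintype.card A : ℝ) * q (Sum.inr (cycPerm eB s y)) := by
          intro s
          rw [Finset.sum_const, Finset.card_univ, ZMod.card, nsmul_eq_mul]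
        calc ∑ s, ∑ t : ZMod (Fintype.card A), q (σ (t, s) (Sum.inr y))
            = ∑ s, (Fintype.card A : ℝ) * q (Sum.inr (cycPerm eB s y)) := by
              refine Finset.sum_congr rfl (fun s _ => ?_)
              rw [← hinner s]
              rfl
          _ = (Fintype.card A : ℝ) * ∑ s, q (Sum.inr (cycPerm eB s y)) := by
              rw [Finset.mul_sum]
          _ = (Fintype.card A : ℝ) * (1 - lam) := by
              have h3 := sum_cycPerm (M := ℝ) eB (fun z => q (Sum.inr z)) y
              rw [h3, hlam2]
          _ = N * Qmix (A := A) (B := B) lam (Sum.inr y) := by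
              simp only [Qmix, QA, QB, hN]
              field_simp
              ring
  have hσsymm : ∀ g : G, (σ g).symm = σ (-g) := by
    intro g
    show (Equiv.sumCongr (cycPerm eA g.1) (cycPerm eB g.2)).symm = _
    rw [Equiv.sumCongr_symm, cycPerm_symm, cycPerm_symm]
    rfl
  have havg' : ∀ z, ∑ g : G, q ((σ g).symm z) = N * Qmix (A := A) (B := B) lam z := by
    intro z
    rw [← havg z]
    refine Fintype.sum_equiv (Equiv.neg G) _ _ (fun g => ?_)
    rw [hσsymm g, Equiv.neg_apply]
  -- main argument
  show rdFun d Δ q ≤ sInf { r | ∃ W, IsKernel W ∧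
      (∑ x, ∑ y, Qmix (A := A) (B := B) lam x * W x y * d x y) ≤ Δ ∧
      r = mutualInfo (Qmix (A := A) (B := B) lam) W }
  refine le_csInf ?_ ?_
  · -- nonempty: identity kernel
    refine ⟨mutualInfo (Qmix (A := A) (B := B) lam) (fun x y => if x = y then 1 else 0),
      (fun x y => if x = y then 1 else 0), ⟨fun x y => by positivity, fun x => by
        simp [Finset.sum_ite_eq]⟩, ?_, rfl⟩
    have hzero : ∀ x y : A ⊕ B,
        Qmix (A := A) (B := B) lam x * (if x = y then (1:ℝ) else 0) * d x y = 0 := by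
      intro x y
      by_cases hxy : x = y
      · subst hxy
        have : d x x = 0 := dAhl_refl a b x
        rw [this, mul_zero]
      · rw [if_neg hxy, mul_zero, zero_mul]
    calc (∑ x, ∑ y, Qmix (A := A) (B := B) lam x * (if x = y then (1:ℝ) else 0) * d x y)
        = 0 :=
          Finset.sum_eq_zero (fun x _ => Finset.sum_eq_zero (fun y _ => hzero x y))
      _ ≤ Δ := hΔ
  · rintro r ⟨W, hWk, hWd, rfl⟩
    set c : G → ℝ := fun _ => N⁻¹ with hc
    have hc_nonneg : ∀ g, 0 ≤ c g := fun g => by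
      show (0:ℝ) ≤ N⁻¹
      positivity
    have hc1 : ∑ g : G, c g = 1 := by
      show ∑ _g : G, N⁻¹ = 1
      rw [Finset.sum_const, Finset.card_univ, nsmul_eq_mul, hcardG]
      exact mul_inv_cancel₀ hNpos.ne'
    set W' : (A ⊕ B) → (A ⊕ B) → ℝ := fun x y => ∑ g : G, c g * W (σ g x) (σ g y) with hW'
    have hW'k : IsKernel W' := by
      constructor
      · intro x y
        exact Finset.sum_nonneg (fun g _ => mul_nonneg (hc_nonneg g) (hWk.1 _ _))
      · intro x
        calc ∑ y, W' x y = ∑ g : G, ∑ y, c g * W (σ g x) (σ g y) := Finset.sum_comm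
          _ = ∑ g : G, c g * ∑ y, W (σ g x) (σ g y) :=
              Finset.sum_congr rfl (fun g _ => by rw [Finset.mul_sum])
          _ = ∑ g : G, c g * 1 := by
              refine Finset.sum_congr rfl (fun g _ => ?_)
              rw [Fintype.sum_equiv (σ g) (fun y => W (σ g x) (σ g y))
                (fun y => W (σ g x) y) (fun y => rfl), hWk.2 (σ g x)]
          _ = 1 := by
              rw [Finset.sum_congr rfl (fun g (_ : g ∈ Finset.univ) => mul_one (c g))]
              exact hc1
    have hper : ∀ g : G, (∑ x, ∑ y, q x * W (σ g x) (σ g y) * d x y)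
        = ∑ x, ∑ y, q ((σ g).symm x) * W x y * d x y := by
      intro g
      refine Fintype.sum_equiv (σ g) _ _ (fun x => ?_)
      refine Fintype.sum_equiv (σ g) _ _ (fun y => ?_)
      rw [Equiv.symm_apply_apply, hdinv g x y]
    have hW'd : (∑ x, ∑ y, q x * W' x y * d x y) ≤ Δ := by
      calc (∑ x, ∑ y, q x * W' x y * d x y)
          = ∑ x, ∑ y, ∑ g : G, c g * (q x * W (σ g x) (σ g y) * d x y) := by
            refine Finset.sum_congr rfl (fun x _ => Finset.sum_congr rfl (fun y _ => ?_))
            show (q x * ∑ g : G, c g * W (σ g x) (σ g y)) * d x y = _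
            rw [Finset.mul_sum, Finset.sum_mul]
            exact Finset.sum_congr rfl (fun g _ => by ring)
        _ = ∑ x, ∑ g : G, ∑ y, c g * (q x * W (σ g x) (σ g y) * d x y) :=
            Finset.sum_congr rfl (fun x _ => Finset.sum_comm)
        _ = ∑ g : G, ∑ x, ∑ y, c g * (q x * W (σ g x) (σ g y) * d x y) :=
            Finset.sum_comm
        _ = ∑ g : G, c g * ∑ x, ∑ y, q x * W (σ g x) (σ g y) * d x y := by
            refine Finset.sum_congr rfl (fun g _ => ?_)
            rw [Finset.mul_sum]
            exact Finset.sum_congr rfl (fun x _ => by rw [Finset.mul_sum])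
        _ = ∑ g : G, c g * ∑ x, ∑ y, q ((σ g).symm x) * W x y * d x y :=
            Finset.sum_congr rfl (fun g _ => by rw [hper g])
        _ = ∑ g : G, ∑ x, ∑ y, c g * (q ((σ g).symm x) * W x y * d x y) := by
            refine Finset.sum_congr rfl (fun g _ => ?_)
            rw [Finset.mul_sum]
            exact Finset.sum_congr rfl (fun x _ => by rw [Finset.mul_sum])
        _ = ∑ x, ∑ g : G, ∑ y, c g * (q ((σ g).symm x) * W x y * d x y) :=
            Finset.sum_comm
        _ = ∑ x, ∑ y, ∑ g : G, c g * (q ((σ g).symm x) * W x y * d x y) :=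
            Finset.sum_congr rfl (fun x _ => Finset.sum_comm)
        _ = ∑ x, ∑ y, Qmix (A := A) (B := B) lam x * W x y * d x y := by
            refine Finset.sum_congr rfl (fun x _ => Finset.sum_congr rfl (fun y _ => ?_))
            have h1 : ∑ g : G, c g * (q ((σ g).symm x) * W x y * d x y)
                = (∑ g : G, c g * q ((σ g).symm x)) * (W x y * d x y) := by
              rw [Finset.sum_mul]
              exact Finset.sum_congr rfl (fun g _ => by ring)
            have h2 : (∑ g : G, c g * q ((σ g).symm x)) = Qmix (A := A) (B := B) lam x := by
              calc ∑ g : G, c g * q ((σ g).symm x)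
                  = N⁻¹ * ∑ g : G, q ((σ g).symm x) := by
                    rw [Finset.mul_sum]
                _ = N⁻¹ * (N * Qmix (A := A) (B := B) lam x) := by rw [havg' x]
                _ = Qmix (A := A) (B := B) lam x := inv_mul_cancel_left₀ hNpos.ne' _
            rw [h1, h2]
            ring
        _ ≤ Δ := hWd
    have step1 : rdFun d Δ q ≤ mutualInfo q W' := by
      have hbdd : BddBelow { r | ∃ V, IsKernel V ∧
          (∑ x, ∑ y, q x * V x y * d x y) ≤ Δ ∧ r = mutualInfo q V } := by
        refine ⟨0, fun r hr => ?_⟩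
        obtain ⟨V, hVk, -, rfl⟩ := hr
        exact mutualInfo_nonneg q V hq.1 hq.2 hVk.1
      exact csInf_le hbdd ⟨W', hW'k, hW'd, rfl⟩
    have step2 : mutualInfo q W' ≤
        ∑ g : G, c g * mutualInfo q (fun x y => W (σ g x) (σ g y)) := by
      exact mutualInfo_convex c q (fun g x y => W (σ g x) (σ g y))
        hc_nonneg hq.1 (fun g x y => hWk.1 _ _)
    have step3 : ∀ g : G, mutualInfo q (fun x y => W (σ g x) (σ g y))
        = mutualInfo (fun z => q ((σ g).symm z)) W := by
      intro g
      have h := mutualInfo_relabel (fun z => q ((σ g).symm z)) W (σ g) (σ g)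
      have h1 : (fun x => q ((σ g).symm (σ g x))) = q :=
        funext (fun x => by rw [Equiv.symm_apply_apply])
      have h2 : mutualInfo q (fun x y => W (σ g x) (σ g y))
          = mutualInfo (fun x => q ((σ g).symm (σ g x))) (fun x y => W (σ g x) (σ g y)) := by
        rw [h1]
      exact h2.trans h
    have step4 : ∑ g : G, c g * mutualInfo (fun z => q ((σ g).symm z)) W ≤
        mutualInfo (fun z => ∑ g : G, c g * q ((σ g).symm z)) W :=
      mutualInfo_concave c (fun g z => q ((σ g).symm z)) W hc_nonneg hc1
        (fun g z => hq.1 _) hWk.1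
    have step5 : (fun z => ∑ g : G, c g * q ((σ g).symm z))
        = Qmix (A := A) (B := B) lam := by
      funext z
      calc ∑ g : G, c g * q ((σ g).symm z)
          = N⁻¹ * ∑ g : G, q ((σ g).symm z) := by
            rw [Finset.mul_sum]
        _ = N⁻¹ * (N * Qmix (A := A) (B := B) lam z) := by rw [havg' z]
        _ = Qmix (A := A) (B := B) lam z := inv_mul_cancel_left₀ hNpos.ne' _
    calc rdFun d Δ q ≤ mutualInfo q W' := step1
      _ ≤ ∑ g : G, c g * mutualInfo q (fun x y => W (σ g x) (σ g y)) := step2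
      _ = ∑ g : G, c g * mutualInfo (fun z => q ((σ g).symm z)) W :=
          Finset.sum_congr rfl (fun g _ => by rw [step3 g])
      _ ≤ mutualInfo (fun z => ∑ g : G, c g * q ((σ g).symm z)) W := step4
      _ = mutualInfo (Qmix (A := A) (B := B) lam) W := by rw [step5]


lemma sub_log_le (p t : ℝ) (hp : 0 ≤ p) (ht : 0 < t) : p - t ≤ p * Real.log (p / t) := by
  rcases eq_or_lt_of_le hp with hp' | hp'
  · rw [← hp', zero_mul, zero_sub]
    linarith
  · have hlog := Real.log_le_sub_one_of_pos (div_pos ht hp')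
    have hrw : Real.log (t / p) = - Real.log (p / t) := by
      rw [Real.log_div ht.ne' hp'.ne', Real.log_div hp'.ne' ht.ne']
      ring
    rw [hrw] at hlog
    have h3 : -(p * Real.log (p / t)) ≤ p * (t / p - 1) :=
      calc -(p * Real.log (p / t)) = p * (-Real.log (p / t)) := by ring
        _ ≤ p * (t / p - 1) := mul_le_mul_of_nonneg_left hlog hp'.le
    have hp2 : p * (t / p - 1) = t - p := by field_simp
    rw [hp2] at h3
    linarith

lemma D2_nonneg (p ξ : ℝ) (hp : p ∈ Set.Icc (0:ℝ) 1) (hξ : ξ ∈ Set.Ioo (0:ℝ) 1) :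
    0 ≤ D2 p ξ := by
  have h1 := sub_log_le p ξ hp.1 hξ.1
  have h2 := sub_log_le (1 - p) (1 - ξ) (by linarith [hp.2]) (by linarith [hξ.2])
  rw [D2]
  linarith

lemma lam_mem_Icc {A B : Type*} [Fintype A] [Fintype B] (q : A ⊕ B → ℝ) (hq : IsProb q) :
    (∑ x, q (Sum.inl x)) ∈ Set.Icc (0:ℝ) 1 := by
  have h2 := hq.2
  rw [Fintype.sum_sum_type] at h2
  have hl : 0 ≤ ∑ x, q (Sum.inl x) := Finset.sum_nonneg (fun x _ => hq.1 _)
  have hr : 0 ≤ ∑ y, q (Sum.inr y) := Finset.sum_nonneg (fun y _ => hq.1 _)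
  exact ⟨hl, by linarith⟩

lemma isProb_Qmix {A B : Type*} [Fintype A] [Fintype B] [Nonempty A] [Nonempty B]
    (lam : ℝ) (hlam : lam ∈ Set.Icc (0:ℝ) 1) :
    IsProb (Qmix (A := A) (B := B) lam) := by
  have hApos : (0:ℝ) < (Fintype.card A : ℝ) := by exact_mod_cast Fintype.card_pos (α := A)
  have hBpos : (0:ℝ) < (Fintype.card B : ℝ) := by exact_mod_cast Fintype.card_pos (α := B)
  constructor
  · intro z
    cases z with
    | inl x =>
        show 0 ≤ lam * (Fintype.card A : ℝ)⁻¹ + (1 - lam) * 0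
        have : 0 ≤ lam * (Fintype.card A : ℝ)⁻¹ :=
          mul_nonneg hlam.1 (by positivity)
        linarith
    | inr y =>
        show 0 ≤ lam * 0 + (1 - lam) * (Fintype.card B : ℝ)⁻¹
        have : 0 ≤ (1 - lam) * (Fintype.card B : ℝ)⁻¹ :=
          mul_nonneg (by linarith [hlam.2]) (by positivity)
        linarith
  · rw [Fintype.sum_sum_type]
    have h1 : ∀ x : A, Qmix (A := A) (B := B) lam (Sum.inl x)
        = lam * (Fintype.card A : ℝ)⁻¹ := by
      intro x
      show lam * (Fintype.card A : ℝ)⁻¹ + (1 - lam) * 0 = _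
      ring
    have h2 : ∀ y : B, Qmix (A := A) (B := B) lam (Sum.inr y)
        = (1 - lam) * (Fintype.card B : ℝ)⁻¹ := by
      intro y
      show lam * 0 + (1 - lam) * (Fintype.card B : ℝ)⁻¹ = _
      ring
    rw [Finset.sum_congr rfl (fun x _ => h1 x), Finset.sum_congr rfl (fun y _ => h2 y),
      Finset.sum_const, Finset.sum_const, Finset.card_univ, Finset.card_univ,
      nsmul_eq_mul, nsmul_eq_mul]
    field_simp
    ring

lemma klDivR_mix_eq {A B : Type*} [Fintype A] [Fintype B] [Nonempty A] [Nonempty B]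
    (lam ξ : ℝ) :
    klDivR (Qmix (A := A) (B := B) lam) (Qmix (A := A) (B := B) ξ) = D2 lam ξ := by
  have hApos : (0:ℝ) < (Fintype.card A : ℝ) := by exact_mod_cast Fintype.card_pos (α := A)
  have hBpos : (0:ℝ) < (Fintype.card B : ℝ) := by exact_mod_cast Fintype.card_pos (α := B)
  rw [klDivR, Fintype.sum_sum_type]
  have h1 : ∀ x : A, Qmix (A := A) (B := B) lam (Sum.inl x) *
      Real.log (Qmix (A := A) (B := B) lam (Sum.inl x) / Qmix (A := A) (B := B) ξ (Sum.inl x))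
      = lam * (Fintype.card A : ℝ)⁻¹ * Real.log (lam / ξ) := by
    intro x
    have ha : Qmix (A := A) (B := B) lam (Sum.inl x) = lam * (Fintype.card A : ℝ)⁻¹ := by
      show lam * (Fintype.card A : ℝ)⁻¹ + (1 - lam) * 0 = _; ring
    have hb : Qmix (A := A) (B := B) ξ (Sum.inl x) = ξ * (Fintype.card A : ℝ)⁻¹ := by
      show ξ * (Fintype.card A : ℝ)⁻¹ + (1 - ξ) * 0 = _; ring
    rw [ha, hb, mul_div_mul_right _ _ (inv_ne_zero hApos.ne')]
  have h2 : ∀ y : B, Qmix (A := A) (B := B) lam (Sum.inr y) *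
      Real.log (Qmix (A := A) (B := B) lam (Sum.inr y) / Qmix (A := A) (B := B) ξ (Sum.inr y))
      = (1 - lam) * (Fintype.card B : ℝ)⁻¹ * Real.log ((1 - lam) / (1 - ξ)) := by
    intro y
    have ha : Qmix (A := A) (B := B) lam (Sum.inr y) = (1 - lam) * (Fintype.card B : ℝ)⁻¹ := by
      show lam * 0 + (1 - lam) * (Fintype.card B : ℝ)⁻¹ = _; ring
    have hb : Qmix (A := A) (B := B) ξ (Sum.inr y) = (1 - ξ) * (Fintype.card B : ℝ)⁻¹ := by
      show ξ * 0 + (1 - ξ) * (Fintype.card B : ℝ)⁻¹ = _; ring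
    rw [ha, hb, mul_div_mul_right _ _ (inv_ne_zero hBpos.ne')]
  rw [Finset.sum_congr rfl (fun x _ => h1 x), Finset.sum_congr rfl (fun y _ => h2 y),
    Finset.sum_const, Finset.sum_const, Finset.card_univ, Finset.card_univ,
    nsmul_eq_mul, nsmul_eq_mul, D2]
  field_simp

lemma klDivR_ge_D2 {A B : Type*} [Fintype A] [Fintype B] [Nonempty A] [Nonempty B]
    (q : A ⊕ B → ℝ) (hq : IsProb q) (ξ : ℝ) (hξ : ξ ∈ Set.Ioo (0:ℝ) 1) :
    D2 (∑ x, q (Sum.inl x)) ξ ≤ klDivR q (Qmix (A := A) (B := B) ξ) := by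
  have hApos : (0:ℝ) < (Fintype.card A : ℝ) := by exact_mod_cast Fintype.card_pos (α := A)
  have hBpos : (0:ℝ) < (Fintype.card B : ℝ) := by exact_mod_cast Fintype.card_pos (α := B)
  have hlam2 : ∑ z, q (Sum.inr z) = 1 - ∑ x, q (Sum.inl x) := by
    have h2 := hq.2
    rw [Fintype.sum_sum_type] at h2
    linarith
  rw [klDivR, Fintype.sum_sum_type]
  have hb1 : ∀ x : A, Qmix (A := A) (B := B) ξ (Sum.inl x) = ξ * (Fintype.card A : ℝ)⁻¹ := by
    intro x
    show ξ * (Fintype.card A : ℝ)⁻¹ + (1 - ξ) * 0 = _; ring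
  have hb2 : ∀ y : B, Qmix (A := A) (B := B) ξ (Sum.inr y)
      = (1 - ξ) * (Fintype.card B : ℝ)⁻¹ := by
    intro y
    show ξ * 0 + (1 - ξ) * (Fintype.card B : ℝ)⁻¹ = _; ring
  have hbApos : (0:ℝ) < ξ * (Fintype.card A : ℝ)⁻¹ := by
    have := hξ.1; positivity
  have hbBpos : (0:ℝ) < (1 - ξ) * (Fintype.card B : ℝ)⁻¹ := by
    have : (0:ℝ) < 1 - ξ := by linarith [hξ.2]
    positivity
  have key1 := logSum Finset.univ (fun x : A => q (Sum.inl x))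
    (fun _ : A => ξ * (Fintype.card A : ℝ)⁻¹)
    (fun x _ => hq.1 _) (fun x _ => hbApos.le)
    (fun x _ h => absurd h hbApos.ne')
  have key2 := logSum Finset.univ (fun y : B => q (Sum.inr y))
    (fun _ : B => (1 - ξ) * (Fintype.card B : ℝ)⁻¹)
    (fun y _ => hq.1 _) (fun y _ => hbBpos.le)
    (fun y _ h => absurd h hbBpos.ne')
  rw [Finset.sum_const, Finset.card_univ, nsmul_eq_mul] at key1 key2
  have hsb1 : (Fintype.card A : ℝ) * (ξ * (Fintype.card A : ℝ)⁻¹) = ξ := by field_simp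
  have hsb2 : (Fintype.card B : ℝ) * ((1 - ξ) * (Fintype.card B : ℝ)⁻¹) = 1 - ξ := by
    field_simp
  rw [hsb1] at key1
  rw [hsb2, hlam2] at key2
  have hrw1 : (∑ x : A, q (Sum.inl x) *
      Real.log (q (Sum.inl x) / Qmix (A := A) (B := B) ξ (Sum.inl x)))
      = ∑ x : A, q (Sum.inl x) * Real.log (q (Sum.inl x) / (ξ * (Fintype.card A : ℝ)⁻¹)) := by
    simp only [hb1]
  have hrw2 : (∑ y : B, q (Sum.inr y) *
      Real.log (q (Sum.inr y) / Qmix (A := A) (B := B) ξ (Sum.inr y)))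
      = ∑ y : B, q (Sum.inr y) *
        Real.log (q (Sum.inr y) / ((1 - ξ) * (Fintype.card B : ℝ)⁻¹)) := by
    simp only [hb2]
  rw [hrw1, hrw2, D2]
  exact add_le_add key1 key2


/-- in Ahlswede's example, Marton's exponent for the source `P = Q_ξ`
reduces to a one-dimensional optimization:
`E_M(R|Δ,Q_ξ) = min { D_2(λ‖ξ) : λ ∈ [0,1], R(Δ|Q_λ) ≥ R }`. -/
theorem marton_exponent_ahlswede
    {A B : Type*} [Fintype A] [Fintype B] [Nonempty A] [Nonempty B]
    [DecidableEq A] [DecidableEq B]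
    (a b : ℝ) (ha : 0 < a) (hb : 0 < b)
    (Δ : ℝ) (hΔ : 0 ≤ Δ) (R : ℝ) (hR : 0 ≤ R)
    (ξ : ℝ) (hξ : ξ ∈ Set.Ioo (0 : ℝ) 1) :
    sInf { e | ∃ q : A ⊕ B → ℝ, IsProb q ∧ R ≤ rdFun (dAhl (A := A) (B := B) a b) Δ q ∧
        e = klDivR q (Qmix (A := A) (B := B) ξ) }
    = sInf { e | ∃ lam : ℝ, lam ∈ Set.Icc (0 : ℝ) 1 ∧
        R ≤ rdFun (dAhl (A := A) (B := B) a b) Δ (Qmix (A := A) (B := B) lam) ∧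
        e = D2 lam ξ } := by
  classical
  set L := { e | ∃ q : A ⊕ B → ℝ, IsProb q ∧ R ≤ rdFun (dAhl (A := A) (B := B) a b) Δ q ∧
      e = klDivR q (Qmix (A := A) (B := B) ξ) } with hL
  set Rs := { e | ∃ lam : ℝ, lam ∈ Set.Icc (0 : ℝ) 1 ∧
      R ≤ rdFun (dAhl (A := A) (B := B) a b) Δ (Qmix (A := A) (B := B) lam) ∧
      e = D2 lam ξ } with hRs
  have hsub : Rs ⊆ L := by
    rintro e ⟨lam, hlam, hrd, rfl⟩
    exact ⟨Qmix (A := A) (B := B) lam, isProb_Qmix lam hlam, hrd,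
      (klDivR_mix_eq (A := A) (B := B) lam ξ).symm⟩
  have hLbdd : BddBelow L := by
    refine ⟨0, ?_⟩
    rintro e ⟨q, hq, -, rfl⟩
    exact le_trans (D2_nonneg _ ξ (lam_mem_Icc q hq) hξ) (klDivR_ge_D2 q hq ξ hξ)
  have hRbdd : BddBelow Rs := by
    refine ⟨0, ?_⟩
    rintro e ⟨lam, hlam, -, rfl⟩
    exact D2_nonneg lam ξ hlam hξ
  have hmap : ∀ e ∈ L, ∃ e' ∈ Rs, e' ≤ e := by
    rintro e ⟨q, hq, hrd, rfl⟩
    exact ⟨D2 (∑ x, q (Sum.inl x)) ξ,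
      ⟨∑ x, q (Sum.inl x), lam_mem_Icc q hq,
        le_trans hrd (rd_le_rd_mix a b Δ hΔ q hq), rfl⟩,
      klDivR_ge_D2 q hq ξ hξ⟩
  by_cases hLne : L.Nonempty
  · have hRne : Rs.Nonempty := by
      obtain ⟨e, he⟩ := hLne
      obtain ⟨e', he', -⟩ := hmap e he
      exact ⟨e', he'⟩
    refine le_antisymm (csInf_le_csInf hLbdd hRne hsub) ?_
    refine le_csInf hLne ?_
    intro e he
    obtain ⟨e', he', hle⟩ := hmap e he
    exact le_trans (csInf_le hRbdd he') hle
  · have hRne : ¬ Rs.Nonempty := fun ⟨e, he⟩ => hLne ⟨e, hsub he⟩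
    rw [Set.not_nonempty_iff_eq_empty] at hLne hRne
    rw [hLne, hRne]
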